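/- In the Game of Privacy extended with independent uniform random bits a (known only to Alice) and c (known only to Carol), the mixed strategy profile in which Alice plays T and B each with probability 1/2 and Carol plays L and R each with probability 1/2 is a Nash equilibrium (in expected payoff), with expected payoffs (4,4) for Alice and Carol. -/

import Mathlib

inductive ACh | T | M | B
  deriving DecidableEq

instance : Fintype ACh := ⟨{.T, .M, .B}, fun x => by cases x <;> simp⟩

inductive CCh | L | Cc | R
  deriving DecidableEq

instance : Fintype CCh := ⟨{.L, .Cc, .R}, fun x => by cases x <;> simp⟩

def gA : ACh → CCh → ℚ
  | .T, .L => 0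
  | .T, .Cc => 0
  | .T, .R => 8
  | .M, .L => 2
  | .M, .Cc => 2
  | .M, .R => 2
  | .B, .L => 8
  | .B, .Cc => 0
  | .B, .R => 0

def gC : ACh → CCh → ℚ
  | .T, .L => 8
  | .T, .Cc => 2
  | .T, .R => 0
  | .M, .L => 0
  | .M, .Cc => 2
  | .M, .R => 0
  | .B, .L => 0
  | .B, .Cc => 2
  | .B, .R => 8

def IsMixA (p : ACh → ℚ) : Prop := (∀ x, 0 ≤ p x) ∧ p .T + p .M + p .B = 1
def IsMixC (q : CCh → ℚ) : Prop := (∀ y, 0 ≤ q y) ∧ q .L + q .Cc + q .R = 1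

def EA (p : ACh → ℚ) (q : CCh → ℚ) : ℚ := ∑ x : ACh, ∑ y : CCh, p x * q y * gA x y
def EC (p : ACh → ℚ) (q : CCh → ℚ) : ℚ := ∑ x : ACh, ∑ y : CCh, p x * q y * gC x y

def pstar : ACh → ℚ := fun x => match x with | .T => 1/2 | .M => 0 | .B => 1/2
def qstar : CCh → ℚ := fun y => match y with | .L => 1/2 | .Cc => 0 | .R => 1/2

/-!
A mixed payoff is a convex combination of pure-strategy payoffs, so a mixed deviation can never
beat the best pure one. Against Carol's half-half mix on L and R, Alice's pure strategies T and B
earn 4 and M earns 2; symmetrically, against Alice's half-half mix on T and B, Carol's L and R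
earn 4 and C earns 2. Hence neither player can improve on the equilibrium payoff 4.
-/

theorem sum_mul_le_of_forall_le {ι R : Type*} [Fintype ι] [Semiring R] [PartialOrder R]
    [IsOrderedRing R] {p v : ι → R} {c : R} (hp : ∀ i, 0 ≤ p i) (hp_sum : ∑ i, p i = 1)
    (hv : ∀ i, v i ≤ c) : ∑ i, p i * v i ≤ c :=
  calc ∑ i, p i * v i ≤ ∑ i, p i * c :=
        Finset.sum_le_sum fun i _ => mul_le_mul_of_nonneg_left (hv i) (hp i)
    _ = c := by rw [← Finset.sum_mul, hp_sum, one_mul]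

theorem ACh.sum_univ {M : Type*} [AddCommMonoid M] (f : ACh → M) :
    ∑ x, f x = f .T + f .M + f .B := by
  simp [Finset.univ, Fintype.elems, add_assoc]

theorem CCh.sum_univ {M : Type*} [AddCommMonoid M] (f : CCh → M) :
    ∑ y, f y = f .L + f .Cc + f .R := by
  simp [Finset.univ, Fintype.elems, add_assoc]

theorem IsMixA.sum_eq_one {p : ACh → ℚ} (hp : IsMixA p) : ∑ x, p x = 1 := by
  rw [ACh.sum_univ]; exact hp.2

theorem IsMixC.sum_eq_one {q : CCh → ℚ} (hq : IsMixC q) : ∑ y, q y = 1 := by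
  rw [CCh.sum_univ]; exact hq.2

theorem EA_eq_sum_mul (p : ACh → ℚ) (q : CCh → ℚ) :
    EA p q = ∑ x, p x * ∑ y, q y * gA x y := by
  simp only [EA, Finset.mul_sum, mul_assoc]

theorem EC_eq_sum_mul (p : ACh → ℚ) (q : CCh → ℚ) :
    EC p q = ∑ y, q y * ∑ x, p x * gC x y := by
  rw [EC, Finset.sum_comm]
  simp only [Finset.mul_sum, mul_left_comm (q _), mul_assoc]

/-- The half-half mixtures on {T,B} and {L,R} form a mixed Nash equilibrium with
expected payoffs (4,4). -/
theorem privacy_mixed_nash :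
    IsMixA pstar ∧ IsMixC qstar ∧
    EA pstar qstar = 4 ∧ EC pstar qstar = 4 ∧
    (∀ p : ACh → ℚ, IsMixA p → EA p qstar ≤ EA pstar qstar) ∧
    (∀ q : CCh → ℚ, IsMixC q → EC pstar q ≤ EC pstar qstar) := by
  have hA : EA pstar qstar = 4 := by
    norm_num [EA_eq_sum_mul, ACh.sum_univ, CCh.sum_univ, pstar, qstar, gA]
  have hC : EC pstar qstar = 4 := by
    norm_num [EC_eq_sum_mul, ACh.sum_univ, CCh.sum_univ, pstar, qstar, gC]
  have pure_A_le : ∀ x, ∑ y, qstar y * gA x y ≤ 4 := by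
    intro x; cases x <;> norm_num [CCh.sum_univ, qstar, gA]
  have pure_C_le : ∀ y, ∑ x, pstar x * gC x y ≤ 4 := by
    intro y; cases y <;> norm_num [ACh.sum_univ, pstar, gC]
  refine ⟨⟨fun x => by cases x <;> norm_num [pstar], by norm_num [pstar]⟩,
    ⟨fun y => by cases y <;> norm_num [qstar], by norm_num [qstar]⟩, hA, hC, ?_, ?_⟩
  · intro p hp
    rw [hA, EA_eq_sum_mul]
    exact sum_mul_le_of_forall_le hp.1 hp.sum_eq_one pure_A_le
  · intro q hq
    rw [hC, EC_eq_sum_mul]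
    exact sum_mul_le_of_forall_le hq.1 hq.sum_eq_one pure_C_le
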